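/- arXiv:1402.3642 — 2 statements merged into one kernel-verified Lean document; each statement's English description precedes it below -/
import Mathlib

section
/- Let Ω be a proper open convex subset of a real normed vector space V and let λ > 0. Then the function x ↦ (dist(x, V \ Ω))^{−λ} is convex on Ω. -/
/-!
On a convex set `s` the distance to the complement is concave: if `ball x r` and `ball y ρ` lie
in `s`, then so does `ball (a • x + b • y) (a * r + b * ρ)`, since each of its points is the same
convex combination of points of the two smaller balls. On an open proper `Ω` this distance is
positive, and `t ↦ t ^ (-λ)` is convex and antitone on `(0, ∞)`; a convex antitone function of a
concave one is convex.
-/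

open Metric Real Set

theorem ConvexOn.comp_concaveOn_of_mapsTo {𝕜 E α β : Type*} [Semiring 𝕜] [PartialOrder 𝕜]
    [AddCommMonoid E] [AddCommMonoid α] [PartialOrder α] [AddCommMonoid β] [PartialOrder β]
    [SMul 𝕜 E] [SMul 𝕜 α] [SMul 𝕜 β] {s : Set E} {t : Set β} {f : E → β} {g : β → α}
    (hg : ConvexOn 𝕜 t g) (hf : ConcaveOn 𝕜 s f) (hg' : AntitoneOn g t) (hst : MapsTo f s t) :
    ConvexOn 𝕜 s (g ∘ f) :=
  ⟨hf.1, fun _ hx _ hy _ _ ha hb hab =>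
    (hg' (hg.1 (hst hx) (hst hy) ha hb hab) (hst (hf.1 hx hy ha hb hab))
      (hf.2 hx hy ha hb hab)).trans (hg.2 (hst hx) (hst hy) ha hb hab)⟩

theorem Real.convexOn_rpow_of_nonpos {p : ℝ} (hp : p ≤ 0) :
    ConvexOn ℝ (Ioi 0) fun x : ℝ ↦ x ^ p := by
  have hexp : ConvexOn ℝ univ fun t ↦ exp (t * p) :=
    convexOn_exp.comp_linearMap (LinearMap.mulRight ℝ p)
  have hanti : AntitoneOn (fun t ↦ exp (t * p)) univ := fun _ _ _ _ hst ↦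
    exp_le_exp.2 (mul_le_mul_of_nonpos_right hst hp)
  refine (hexp.comp_concaveOn_of_mapsTo strictConcaveOn_log_Ioi.concaveOn hanti
    (mapsTo_univ _ _)).congr fun x hx ↦ ?_
  exact (rpow_def_of_pos hx p).symm

section NormedSpace

variable {E : Type*} [NormedAddCommGroup E] [NormedSpace ℝ E] {s : Set E}

theorem Convex.ball_combo_subset (hs : Convex ℝ s) {x y : E} {r ρ : ℝ} (hx : x ∈ s) (hy : y ∈ s)
    (hr : 0 ≤ r) (hρ : 0 ≤ ρ) (hxs : ball x r ⊆ s) (hys : ball y ρ ⊆ s) {a b : ℝ}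
    (ha : 0 ≤ a) (hb : 0 ≤ b) (hab : a + b = 1) :
    ball (a • x + b • y) (a * r + b * ρ) ⊆ s := by
  intro w hw
  set t := a * r + b * ρ
  have ht : 0 < t := pos_of_mem_ball hw
  set δ := w - (a • x + b • y)
  have hδ : ‖δ‖ < t := by rwa [mem_ball, dist_eq_norm] at hw
  have shift_mem : ∀ c q, c ∈ s → ball c q ⊆ s → 0 ≤ q → c + (q / t) • δ ∈ s := by
    intro c q hc hcs hq
    rcases hq.eq_or_lt with rfl | hq
    · simpa using hc
    apply hcs
    rw [mem_ball, dist_eq_norm, add_sub_cancel_left, norm_smul, Real.norm_of_nonneg (by positivity)]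
    calc q / t * ‖δ‖ < q / t * t := by gcongr
      _ = q := div_mul_cancel₀ q ht.ne'
  have hw_eq : a • (x + (r / t) • δ) + b • (y + (ρ / t) • δ) = w := by
    calc _ = a • x + b • y + (t / t) • δ := by module
      _ = w := by rw [div_self ht.ne', one_smul, add_sub_cancel]
  exact hw_eq ▸ hs (shift_mem x r hx hxs hr) (shift_mem y ρ hy hys hρ) ha hb hab

theorem Convex.concaveOn_infDist_compl (hs : Convex ℝ s) :
    ConcaveOn ℝ s fun x ↦ infDist x sᶜ := by
  refine ⟨hs, fun x hx y hy a b ha hb hab ↦ ?_⟩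
  rcases sᶜ.eq_empty_or_nonempty with hempty | hne
  · simp [hempty]
  simp only [smul_eq_mul]
  refine (le_infDist hne).2 fun w hw ↦ not_lt.1 fun hlt ↦ hw ?_
  exact hs.ball_combo_subset hx hy infDist_nonneg infDist_nonneg ball_infDist_compl_subset
    ball_infDist_compl_subset ha hb hab (mem_ball'.2 hlt)

end NormedSpace

/-- `x ↦ dist(x, V \ Ω)^{-λ}` is convex on a proper open convex
subset `Ω`, for `λ > 0`. -/
theorem convexOn_rpow_neg_dist_to_compl
    {V : Type*} [NormedAddCommGroup V] [NormedSpace ℝ V]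
    (Ω : Set V) (hopen : IsOpen Ω) (hconv : Convex ℝ Ω) (hproper : Ω ≠ Set.univ)
    (lam : ℝ) (hlam : 0 < lam) :
    ConvexOn ℝ Ω (fun x => Metric.infDist x Ωᶜ ^ (-lam)) := by
  have hp : -lam ≤ 0 := neg_nonpos.2 hlam.le
  have hpos : MapsTo (fun x ↦ infDist x Ωᶜ) Ω (Ioi 0) := fun x hx ↦
    (hopen.isClosed_compl.notMem_iff_infDist_pos (nonempty_compl.2 hproper)).1 (not_not_intro hx)
  exact (convexOn_rpow_of_nonpos hp).comp_concaveOn_of_mapsTo hconv.concaveOn_infDist_compl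
    (antitoneOn_rpow_Ioi_of_exponent_nonpos hp) hpos
end

section
/- Let f be a closed proper convex function on a finite-dimensional real vector space V with dual V*, and let v ∈ V. Then v belongs to E(f) = {v : ∃ a ∈ ℝ, f(x+v) = f(x) + a for all x ∈ V} if and only if the linear functional y ↦ ⟨v,y⟩ is constant on dom(f*), where f* is the Legendre transform of f. Moreover, in that case the constant a equals that constant value of ⟨v,·⟩ on dom(f*). -/
open NormedSpace

/-- The epigraph of an `EReal`-valued function. -/
def epigraph {V : Type*} (f : V → EReal) : Set (V × ℝ) :=
  {p | f p.1 ≤ (p.2 : EReal)}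

/-- A function `f : V → ℝ ∪ {+∞}` (never `-∞`) is closed proper convex if its
epigraph is closed, convex and nonempty. -/
def ClosedProperConvexOn {V : Type*} [NormedAddCommGroup V] [NormedSpace ℝ V]
    (f : V → EReal) : Prop :=
  (∀ x, f x ≠ ⊥) ∧ IsClosed (epigraph f) ∧ Convex ℝ (epigraph f) ∧
    (epigraph f).Nonempty

/-- The Legendre (Fenchel) transform `f*(y) = sup_{x ∈ dom f} (⟨x,y⟩ - f x)`. -/
noncomputable def legendre {V : Type*} [NormedAddCommGroup V] [NormedSpace ℝ V]
    (f : V → EReal) (y : StrongDual ℝ V) : EReal :=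
  ⨆ x : {x : V // f x ≠ ⊤}, ((y x.1 : EReal) - f x.1)

/-!
The condition `f (x + v) = f x + a` says exactly that `epigraph f` is invariant under
translation by `(v, a)`. By Hahn–Banach, a nonempty closed convex set `S` is invariant under
translation by `w` iff `φ w = 0` for every continuous functional `φ` bounded above on `S`.
A functional bounded above on an epigraph has `φ (0, 1) ≤ 0`; when `φ (0, 1) < 0` it is a
positive multiple of `(x, r) ↦ y x - r` with `y ∈ dom f*`, and the remaining ones become of
that kind after adding such a functional for one fixed `y₀ ∈ dom f*`.
-/

theorem EReal.add_coe_le_add_coe_iff (e : EReal) (a r : ℝ) :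
    e + a ≤ (r : EReal) + a ↔ e ≤ r := by
  induction e using EReal.rec with
  | bot => simp
  | coe x => norm_cast; simp
  | top => simp [← EReal.coe_add]

theorem apply_nonpos_of_bddAbove_of_add_mem {E F : Type*} [AddMonoid E] [FunLike F E ℝ]
    [AddMonoidHomClass F E ℝ] {φ : F} {S : Set E} {w : E} (hS : S.Nonempty)
    (hw : ∀ p ∈ S, p + w ∈ S) (hφ : BddAbove (φ '' S)) : φ w ≤ 0 := by
  obtain ⟨p, hp⟩ := hS
  obtain ⟨M, hM⟩ := hφ
  have hmem : ∀ n : ℕ, p + n • w ∈ S := by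
    intro n
    induction n with
    | zero => simpa using hp
    | succ n ih => simpa [succ_nsmul, ← add_assoc] using hw _ ih
  by_contra! hpos
  obtain ⟨n, hn⟩ := exists_nat_gt ((M - φ p) / φ w)
  have hle : φ p + n * φ w ≤ M := by
    simpa [map_add, map_nsmul] using hM ⟨_, hmem n, rfl⟩
  rw [div_lt_iff₀ hpos] at hn
  linarith

theorem BddAbove.image_add {α β : Type*} [Add β] [Preorder β] [AddLeftMono β] [AddRightMono β]
    {s : Set α} {f g : α → β} (hf : BddAbove (f '' s)) (hg : BddAbove (g '' s)) :
    BddAbove ((f + g) '' s) := by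
  obtain ⟨M, hM⟩ := hf
  obtain ⟨N, hN⟩ := hg
  refine ⟨M + N, ?_⟩
  rintro _ ⟨p, hp, rfl⟩
  exact add_le_add (hM ⟨p, hp, rfl⟩) (hN ⟨p, hp, rfl⟩)

section Recession

variable {E : Type*} [AddCommGroup E] [Module ℝ E] [TopologicalSpace E]
  [IsTopologicalAddGroup E] [ContinuousSMul ℝ E] [LocallyConvexSpace ℝ E] {S : Set E} {w : E}

theorem add_mem_of_forall_bddAbove (hSc : IsClosed S) (hSv : Convex ℝ S)
    (hw : ∀ φ : StrongDual ℝ E, BddAbove (φ '' S) → φ w ≤ 0) {p : E} (hp : p ∈ S) :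
    p + w ∈ S := by
  by_contra hpw
  obtain ⟨φ, u, hlt, hgt⟩ := geometric_hahn_banach_closed_point hSv hSc hpw
  have hφw := hw φ ⟨u, by rintro _ ⟨q, hq, rfl⟩; exact (hlt q hq).le⟩
  linarith [hlt p hp, map_add φ p w]

theorem forall_add_mem_iff_forall_bddAbove_apply_eq_zero (hSc : IsClosed S) (hSv : Convex ℝ S)
    (hS : S.Nonempty) :
    (∀ p, p + w ∈ S ↔ p ∈ S) ↔
      ∀ φ : StrongDual ℝ E, BddAbove (φ '' S) → φ w = 0 := by
  constructor
  · intro hinv φ hφ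
    have hpos := apply_nonpos_of_bddAbove_of_add_mem hS (fun p hp => (hinv p).2 hp) hφ
    have hneg := apply_nonpos_of_bddAbove_of_add_mem (w := -w) hS
      (fun p hp => (hinv _).1 (by simpa using hp)) hφ
    rw [map_neg] at hneg
    linarith
  · intro h p
    refine ⟨fun hp => ?_, add_mem_of_forall_bddAbove hSc hSv (fun φ hφ => (h φ hφ).le)⟩
    simpa using add_mem_of_forall_bddAbove (w := -w) hSc hSv
      (fun φ hφ => by rw [map_neg, h φ hφ, neg_zero]) hp

end Recession

theorem mem_epigraph {V : Type*} {f : V → EReal} {p : V × ℝ} :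
    p ∈ epigraph f ↔ f p.1 ≤ p.2 :=
  Iff.rfl

theorem forall_add_eq_iff_add_mem_epigraph_iff {V : Type*} [Add V] {f : V → EReal} {v : V}
    {a : ℝ} :
    (∀ x, f (x + v) = f x + a) ↔
      ∀ p : V × ℝ, p + (v, a) ∈ epigraph f ↔ p ∈ epigraph f := by
  simp only [mem_epigraph, Prod.fst_add, Prod.snd_add]
  constructor
  · intro h p
    rw [h, EReal.coe_add, EReal.add_coe_le_add_coe_iff]
  · intro h x
    have hle : ∀ r : ℝ, f (x + v) ≤ r ↔ f x + a ≤ r := fun r => by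
      rw [← sub_add_cancel r a, EReal.coe_add, EReal.add_coe_le_add_coe_iff, ← EReal.coe_add]
      exact h (x, r - a)
    exact le_antisymm (EReal.le_of_forall_lt_iff_le.1 fun r hr => (hle r).2 hr.le)
      (EReal.le_of_forall_lt_iff_le.1 fun r hr => (hle r).1 hr.le)

theorem add_zero_one_mem_epigraph {V : Type*} [AddZeroClass V] {f : V → EReal} {p : V × ℝ}
    (hp : p ∈ epigraph f) : p + (0, 1) ∈ epigraph f := by
  simp only [mem_epigraph, Prod.fst_add, Prod.snd_add, add_zero] at hp ⊢
  exact hp.trans (by exact_mod_cast (le_add_of_nonneg_right zero_le_one))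

section Legendre

variable {V : Type*} [NormedAddCommGroup V] [NormedSpace ℝ V] {f : V → EReal}

noncomputable def epiFunctional (y : StrongDual ℝ V) : StrongDual ℝ (V × ℝ) :=
  y.coprod (-ContinuousLinearMap.id ℝ ℝ)

@[simp]
theorem epiFunctional_apply (y : StrongDual ℝ V) (p : V × ℝ) :
    epiFunctional y p = y p.1 - p.2 := by
  simp [epiFunctional, sub_eq_add_neg]

theorem legendre_le_coe_iff {y : StrongDual ℝ V} {g : ℝ} :
    legendre f y ≤ g ↔ ∀ p ∈ epigraph f, epiFunctional y p ≤ g := by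
  refine ⟨fun h p hp => ?_, fun h => iSup_le fun ⟨x, hx⟩ => ?_⟩
  · have hx : f p.1 ≠ ⊤ := ne_top_of_le_ne_top (EReal.coe_ne_top _) hp
    refine EReal.coe_le_coe_iff.1 ?_
    calc ((epiFunctional y p : ℝ) : EReal) = y p.1 - p.2 := by simp
      _ ≤ y p.1 - f p.1 := EReal.sub_le_sub le_rfl hp
      _ ≤ legendre f y :=
        le_iSup (fun x : {x // f x ≠ ⊤} => (y x.1 : EReal) - f x.1) ⟨p.1, hx⟩
      _ ≤ g := h
  · induction hfx : f x using EReal.rec with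
    | bot =>
      have := h (x, y x - g - 1) (by simp [mem_epigraph, hfx])
      rw [epiFunctional_apply] at this
      linarith
    | coe r =>
      have := h (x, r) (by simp [mem_epigraph, hfx])
      simpa [← EReal.coe_sub] using this
    | top => exact absurd hfx hx

theorem legendre_ne_top_iff {y : StrongDual ℝ V} :
    legendre f y ≠ ⊤ ↔ BddAbove (epiFunctional y '' epigraph f) := by
  simp only [bddAbove_def, Set.forall_mem_image]
  constructor
  · intro h
    induction hy : legendre f y using EReal.rec with
    | bot => exact ⟨0, legendre_le_coe_iff.1 (by simp [hy])⟩
    | coe g => exact ⟨g, legendre_le_coe_iff.1 hy.le⟩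
    | top => exact absurd hy h
  · rintro ⟨g, hg⟩
    exact ne_top_of_le_ne_top (EReal.coe_ne_top g) (legendre_le_coe_iff.2 hg)

theorem epiFunctional_normalize {φ : StrongDual ℝ (V × ℝ)} (hφ : φ (0, 1) ≠ 0) :
    epiFunctional ((-φ (0, 1))⁻¹ • φ.comp (.inl ℝ V ℝ)) = (-φ (0, 1))⁻¹ • φ := by
  ext
  · simp
  · have h00 : φ (0, 0) = 0 := by rw [Prod.mk_zero_zero, map_zero]
    simp [h00, hφ]

theorem legendre_ne_top_of_bddAbove {φ : StrongDual ℝ (V × ℝ)}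
    (hφ : BddAbove (φ '' epigraph f)) (hneg : φ (0, 1) < 0) :
    legendre f ((-φ (0, 1))⁻¹ • φ.comp (.inl ℝ V ℝ)) ≠ ⊤ := by
  obtain ⟨M, hM⟩ := hφ
  rw [legendre_ne_top_iff, epiFunctional_normalize hneg.ne]
  refine ⟨(-φ (0, 1))⁻¹ * M, ?_⟩
  rintro _ ⟨p, hp, rfl⟩
  exact mul_le_mul_of_nonneg_left (hM ⟨p, hp, rfl⟩) (inv_nonneg.2 (neg_nonneg.2 hneg.le))

end Legendre

section ClosedProperConvex

variable {V : Type*} [NormedAddCommGroup V] [NormedSpace ℝ V] {f : V → EReal}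

theorem ClosedProperConvexOn.exists_legendre_ne_top (hf : ClosedProperConvexOn f) :
    ∃ y : StrongDual ℝ V, legendre f y ≠ ⊤ := by
  obtain ⟨hbot, hclosed, hconv, ⟨x, r⟩, hxr⟩ := hf
  obtain ⟨t, ht⟩ : ∃ t : ℝ, f x = t :=
    ⟨_, (EReal.coe_toReal (ne_top_of_le_ne_top (EReal.coe_ne_top r) hxr) (hbot x)).symm⟩
  have hnot : (x, t) + -(0, 1) ∉ epigraph f := by
    simp only [mem_epigraph, Prod.fst_add, Prod.snd_add, Prod.fst_neg, Prod.snd_neg, neg_zero,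
      add_zero, ht, EReal.coe_le_coe_iff, not_le]
    linarith
  by_contra! htop
  refine hnot (add_mem_of_forall_bddAbove hclosed hconv (fun φ hφ => ?_) ht.le)
  by_contra! hpos
  rw [map_neg] at hpos
  exact legendre_ne_top_of_bddAbove hφ (neg_pos.1 hpos) (htop _)

theorem ClosedProperConvexOn.apply_eq_zero_of_bddAbove (hf : ClosedProperConvexOn f) {v : V}
    {c : ℝ} (hc : ∀ y : StrongDual ℝ V, legendre f y ≠ ⊤ → y v = c)
    {φ : StrongDual ℝ (V × ℝ)} (hφ : BddAbove (φ '' epigraph f)) : φ (v, c) = 0 := by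
  have hneg : ∀ ψ : StrongDual ℝ (V × ℝ), BddAbove (ψ '' epigraph f) → ψ (0, 1) < 0 →
      ψ (v, c) = 0 := by
    intro ψ hψ hs
    have hyv := hc _ (legendre_ne_top_of_bddAbove hψ hs)
    have h := congr($(epiFunctional_normalize hs.ne) (v, c))
    rw [epiFunctional_apply, hyv, sub_self, smul_apply, smul_eq_mul,
      eq_comm, mul_eq_zero] at h
    exact h.resolve_left (by simpa using hs.ne)
  -- adding `epiFunctional y₀` makes the vertical slope `φ (0, 1)` strictly negative
  obtain ⟨y₀, hy₀⟩ := hf.exists_legendre_ne_top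
  rw [legendre_ne_top_iff] at hy₀
  have hs : φ (0, 1) ≤ 0 :=
    apply_nonpos_of_bddAbove_of_add_mem hf.2.2.2 (fun p => add_zero_one_mem_epigraph) hφ
  have hsum := hneg (φ + epiFunctional y₀) (hφ.image_add hy₀)
    (by simp only [add_apply, epiFunctional_apply, map_zero]; linarith)
  have hy₀vc := hneg _ hy₀ (by simp)
  simpa [hy₀vc] using hsum

theorem ClosedProperConvexOn.forall_add_eq_iff_forall_bddAbove_apply_eq_zero
    (hf : ClosedProperConvexOn f) {v : V} {a : ℝ} :
    (∀ x, f (x + v) = f x + a) ↔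
      ∀ φ : StrongDual ℝ (V × ℝ), BddAbove (φ '' epigraph f) → φ (v, a) = 0 :=
  forall_add_eq_iff_add_mem_epigraph_iff.trans
    (forall_add_mem_iff_forall_bddAbove_apply_eq_zero hf.2.1 hf.2.2.1 hf.2.2.2)

end ClosedProperConvex

theorem mem_E_iff_const_on_dom_legendre_general
    {V : Type*} [NormedAddCommGroup V] [NormedSpace ℝ V]
    (f : V → EReal) (hf : ClosedProperConvexOn f) (v : V) :
    ((∃ a : ℝ, ∀ x : V, f (x + v) = f x + (a : EReal)) ↔
      (∃ c : ℝ, ∀ y : StrongDual ℝ V, legendre f y ≠ ⊤ → y v = c)) ∧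
    (∀ a : ℝ, (∀ x : V, f (x + v) = f x + (a : EReal)) →
      ∀ y : StrongDual ℝ V, legendre f y ≠ ⊤ → y v = a) := by
  have hconst : ∀ a : ℝ, (∀ x : V, f (x + v) = f x + (a : EReal)) →
      ∀ y : StrongDual ℝ V, legendre f y ≠ ⊤ → y v = a := by
    intro a ha y hy
    have hya := hf.forall_add_eq_iff_forall_bddAbove_apply_eq_zero.1 ha _
      (legendre_ne_top_iff.1 hy)
    rwa [epiFunctional_apply, sub_eq_zero] at hya
  refine ⟨⟨fun ⟨a, ha⟩ => ⟨a, hconst a ha⟩, fun ⟨c, hc⟩ => ⟨c, ?_⟩⟩, hconst⟩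
  exact hf.forall_add_eq_iff_forall_bddAbove_apply_eq_zero.2 fun φ hφ =>
    hf.apply_eq_zero_of_bddAbove hc hφ

/-- for a closed proper convex `f` on a finite-dimensional space,
`v ∈ E(f)` iff `y ↦ ⟨v,y⟩` is constant on `dom f*`; moreover, the increment `a`
equals that constant. -/
theorem mem_E_iff_const_on_dom_legendre
    {V : Type*} [NormedAddCommGroup V] [NormedSpace ℝ V] [FiniteDimensional ℝ V]
    (f : V → EReal) (hf : ClosedProperConvexOn f) (v : V) :
    ((∃ a : ℝ, ∀ x : V, f (x + v) = f x + (a : EReal)) ↔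
      (∃ c : ℝ, ∀ y : StrongDual ℝ V, legendre f y ≠ ⊤ → y v = c)) ∧
    (∀ a : ℝ, (∀ x : V, f (x + v) = f x + (a : EReal)) →
      ∀ y : StrongDual ℝ V, legendre f y ≠ ⊤ → y v = a) :=
  mem_E_iff_const_on_dom_legendre_general f hf v
end
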